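/- Let π be an indecomposable 132-avoiding permutation with inv(π) = k, and let λ = Λ(π) be the partition of k given by its Lehmer code. Then π avoids the pattern 2341 if and only if both of the following hold: (a) there is no index i with λ_i = λ_{i+1} = λ_{i+2} > 0; and (b) whenever i < j with λ_i = λ_{i+1} > 0 and λ_j = λ_{j+1} > 0, there exists an index l with i < l < j and λ_l − λ_{l+1} ≥ 2. (Equivalently, π avoids 2341 if and only if λ belongs to the sand pile model SPM(k).) -/
import Mathlib


/-- A permutation `π` of length `n` (as a bijection of `Fin n`, position `i` has value `π i`)
contains the pattern `p` of length `m` if some subsequence of `π` is order-isomorphic to `p`. -/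
def Contains {n m : ℕ} (π : Equiv.Perm (Fin n)) (p : Equiv.Perm (Fin m)) : Prop :=
  ∃ f : Fin m → Fin n, StrictMono f ∧ ∀ a b : Fin m, π (f a) < π (f b) ↔ p a < p b

/-- `π` avoids the pattern `p`. -/
def Avoids {n m : ℕ} (π : Equiv.Perm (Fin n)) (p : Equiv.Perm (Fin m)) : Prop :=
  ¬ Contains π p

/-- The number of inversions of `π`: pairs of positions `i < j` with `π i > π j`. -/
noncomputable def invCount {n : ℕ} (π : Equiv.Perm (Fin n)) : ℕ :=
  Nat.card {ij : Fin n × Fin n // ij.1 < ij.2 ∧ π ij.2 < π ij.1}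

/-- The pattern 132. -/
def p132 : Equiv.Perm (Fin 3) := ⟨![0,2,1], ![0,2,1], by decide, by decide⟩

/-- `π` is indecomposable: it is not the direct sum of two nonempty permutations,
i.e. there is no `0 < d < n` such that the first `d` positions carry the values `0, …, d-1`. -/
def Indecomposable {n : ℕ} (π : Equiv.Perm (Fin n)) : Prop :=
  ¬ ∃ d : ℕ, 0 < d ∧ d < n ∧ ∀ i : Fin n, (i : ℕ) < d → (π i : ℕ) < d

/-- The Lehmer code of `π` at position `i`: the number of positions `j > i` with
`π j < π i`.  For an indecomposable `132`-avoiding permutation the Lehmer code is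
weakly decreasing and its nonzero entries form the partition `Λ(π)` of `inv(π)`. -/
noncomputable def lehmer {n : ℕ} (π : Equiv.Perm (Fin n)) (i : Fin n) : ℕ :=
  Nat.card {j : Fin n // i < j ∧ π j < π i}

/-- The Lehmer code of `π`, extended by zeroes beyond position `n`; for an indecomposable
`132`-avoider this is exactly the partition `λ = Λ(π)` with the convention `λ_i = 0` for
indices `i` beyond the number of parts (indices are 0-based here). -/
noncomputable def lehmerExt {n : ℕ} (π : Equiv.Perm (Fin n)) (i : ℕ) : ℕ :=
  if h : i < n then lehmer π ⟨i, h⟩ else 0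

def p2341 : Equiv.Perm (Fin 4) := ⟨![1,2,3,0], ![3,0,1,2], by decide, by decide⟩

/-! ### Auxiliary machinery -/

/-- The values of `π` as a function on `ℕ` (zero beyond `n`). -/
noncomputable def VV {n : ℕ} (π : Equiv.Perm (Fin n)) (x : ℕ) : ℕ :=
  if h : x < n then (π ⟨x, h⟩ : ℕ) else 0

namespace SPMaux

/-- Existence of a greatest element below a bound satisfying a predicate. -/
lemma exists_greatest {P : ℕ → Prop} :
    ∀ c : ℕ, (∃ a, a < c ∧ P a) →
      ∃ a, a < c ∧ P a ∧ ∀ l, a < l → l < c → ¬ P l := by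
  intro c
  induction c with
  | zero => rintro ⟨a, ha, -⟩; omega
  | succ c ih =>
    rintro ⟨a, ha, hPa⟩
    by_cases hc : P c
    · exact ⟨c, Nat.lt_succ_self c, hc, fun l h1 h2 => by omega⟩
    · have h' : ∃ a, a < c ∧ P a := by
        rcases Nat.lt_or_ge a c with h | h
        · exact ⟨a, h, hPa⟩
        · have : a = c := by omega
          exact absurd (this ▸ hPa) hc
      obtain ⟨b, hb, hPb, hmax⟩ := ih h'
      refine ⟨b, by omega, hPb, fun l h1 h2 => ?_⟩
      by_cases hl : l = c
      · exact hl ▸ hc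
      · exact hmax l h1 (by omega)

variable {n : ℕ} (π : Equiv.Perm (Fin n))

lemma VV_val (j : Fin n) : VV π (j : ℕ) = (π j : ℕ) := by
  simp [VV, j.isLt]

lemma VV_inj {x y : ℕ} (hx : x < n) (hy : y < n) (h : VV π x = VV π y) : x = y := by
  rw [VV, dif_pos hx, VV, dif_pos hy] at h
  have := π.injective (Fin.val_injective h)
  simpa using congrArg Fin.val this

lemma VV_ne {x y : ℕ} (hx : x < n) (hy : y < n) (h : x ≠ y) : VV π x ≠ VV π y :=
  fun he => h (VV_inj π hx hy he)

lemma contains_of_mono {m : ℕ} (p : Equiv.Perm (Fin m))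
    (f : Fin m → Fin n) (hf : StrictMono f)
    (h : ∀ a b : Fin m, p a < p b → π (f a) < π (f b)) : Contains π p := by
  refine ⟨f, hf, fun a b => ⟨fun hlt => ?_, h a b⟩⟩
  rcases lt_trichotomy (p a) (p b) with hc | hc | hc
  · exact hc
  · have hab : a = b := p.injective hc
    subst hab; exact absurd hlt (lt_irrefl _)
  · exact absurd (h b a hc) (lt_asymm hlt)

/-- The `132`-avoidance hypothesis in value form. -/
lemma h132V (h132 : Avoids π p132) :
    ∀ x y z : ℕ, x < y → y < z → z < n → VV π x < VV π z → VV π z < VV π y → False := by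
  intro x y z hxy hyz hz h1 h2
  have hy : y < n := hyz.trans hz
  have hx : x < n := hxy.trans hy
  have f1 : (π ⟨x, hx⟩ : ℕ) < (π ⟨z, hz⟩ : ℕ) := by simpa [VV, hx, hz] using h1
  have f2 : (π ⟨z, hz⟩ : ℕ) < (π ⟨y, hy⟩ : ℕ) := by simpa [VV, hz, hy] using h2
  have f3 : (π ⟨x, hx⟩ : ℕ) < (π ⟨y, hy⟩ : ℕ) := f1.trans f2
  apply h132
  apply contains_of_mono π p132 ![⟨x, hx⟩, ⟨y, hy⟩, ⟨z, hz⟩]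
  · intro a b hab
    fin_cases a <;> fin_cases b <;>
      first
        | exact absurd hab (by decide)
        | exact hxy | exact hyz | exact hxy.trans hyz
  · intro a b hab
    fin_cases a <;> fin_cases b <;>
      first
        | exact absurd hab (by decide)
        | exact f1 | exact f2 | exact f3

lemma contains2341 {w x y z : ℕ} (hwx : w < x) (hxy : x < y) (hyz : y < z) (hz : z < n)
    (h1 : VV π z < VV π w) (h2 : VV π w < VV π x) (h3 : VV π x < VV π y) :
    Contains π p2341 := by
  have hy : y < n := hyz.trans hz
  have hx : x < n := hxy.trans hy
  have hw : w < n := hwx.trans hx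
  have f1 : (π ⟨z, hz⟩ : ℕ) < (π ⟨w, hw⟩ : ℕ) := by simpa [VV, hz, hw] using h1
  have f2 : (π ⟨w, hw⟩ : ℕ) < (π ⟨x, hx⟩ : ℕ) := by simpa [VV, hw, hx] using h2
  have f3 : (π ⟨x, hx⟩ : ℕ) < (π ⟨y, hy⟩ : ℕ) := by simpa [VV, hx, hy] using h3
  have f4 := f1.trans f2
  have f5 := f2.trans f3
  have f6 := f4.trans f3
  apply contains_of_mono π p2341 ![⟨w, hw⟩, ⟨x, hx⟩, ⟨y, hy⟩, ⟨z, hz⟩]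
  · intro a b hab
    fin_cases a <;> fin_cases b <;>
      first
        | exact absurd hab (by decide)
        | exact hwx | exact hxy | exact hyz
        | exact hwx.trans hxy | exact hxy.trans hyz | exact (hwx.trans hxy).trans hyz
  · intro a b hab
    fin_cases a <;> fin_cases b <;>
      first
        | exact absurd hab (by decide)
        | exact f1 | exact f2 | exact f3 | exact f4 | exact f5 | exact f6

/-- The Lehmer code entry as a `Finset` cardinality over value comparisons. -/
lemma le_card {i : ℕ} (h : i < n) :
    lehmerExt π i
      = (Finset.univ.filter (fun j : Fin n => i < (j : ℕ) ∧ (π j : ℕ) < VV π i)).card := by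
  classical
  have hset : (Finset.univ.filter (fun j : Fin n => (⟨i, h⟩ : Fin n) < j ∧ π j < π ⟨i, h⟩))
      = (Finset.univ.filter (fun j : Fin n => i < (j : ℕ) ∧ (π j : ℕ) < VV π i)) := by
    ext j
    simp only [Finset.mem_filter, Finset.mem_univ, true_and, Fin.lt_def, VV, dif_pos h]
  rw [lehmerExt, dif_pos h, lehmer, Nat.card_eq_fintype_card, Fintype.card_subtype, hset]

lemma pos_lt {i : ℕ} (h : 0 < lehmerExt π i) : i < n := by
  by_contra hn
  rw [lehmerExt, dif_neg hn] at h
  omega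

lemma mem_le_set {i : ℕ} (h : i < n) (j : Fin n) :
    j ∈ (Finset.univ.filter (fun j : Fin n => i < (j : ℕ) ∧ (π j : ℕ) < VV π i))
      ↔ i < (j : ℕ) ∧ (π j : ℕ) < VV π i := by
  simp

/-- On an ascent the Lehmer code is constant (uses 132-avoidance). -/
lemma asc_eq (h132 : Avoids π p132) {i : ℕ} (h : i + 1 < n)
    (ha : VV π i < VV π (i + 1)) : lehmerExt π i = lehmerExt π (i + 1) := by
  have hi : i < n := by omega
  rw [le_card π hi, le_card π h]
  congr 1
  ext j
  rw [mem_le_set π hi, mem_le_set π h]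
  constructor
  · rintro ⟨h1, h2⟩
    have hj1 : (j : ℕ) ≠ i + 1 := by
      intro he
      have : VV π (i + 1) = (π j : ℕ) := by rw [← he, VV_val]
      omega
    exact ⟨by omega, by omega⟩
  · rintro ⟨h1, h2⟩
    refine ⟨by omega, ?_⟩
    have hj2 : (π j : ℕ) ≠ VV π i := by
      have := VV_ne π j.isLt hi (by omega : (j : ℕ) ≠ i)
      rwa [VV_val] at this
    by_contra hge
    have hgt : VV π i < VV π (j : ℕ) := by rw [VV_val]; omega
    exact h132V π h132 i (i + 1) (j : ℕ) (by omega) h1 j.isLt hgt (by rw [VV_val]; omega)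

/-- On a descent the Lehmer code strictly drops. -/
lemma desc_succ {i : ℕ} (h : i + 1 < n) (hd : VV π (i + 1) < VV π i) :
    lehmerExt π (i + 1) + 1 ≤ lehmerExt π i := by
  have hi : i < n := by omega
  have hv1 : VV π (i + 1) = (π ⟨i + 1, h⟩ : ℕ) := by rw [VV, dif_pos h]
  have hnm : (⟨i + 1, h⟩ : Fin n)
      ∉ (Finset.univ.filter (fun j : Fin n => i + 1 < (j : ℕ) ∧ (π j : ℕ) < VV π (i + 1))) := by
    rw [mem_le_set π h]; simp
  have hsub : insert (⟨i + 1, h⟩ : Fin n)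
      (Finset.univ.filter (fun j : Fin n => i + 1 < (j : ℕ) ∧ (π j : ℕ) < VV π (i + 1)))
      ⊆ (Finset.univ.filter (fun j : Fin n => i < (j : ℕ) ∧ (π j : ℕ) < VV π i)) := by
    intro j hj
    rcases Finset.mem_insert.mp hj with he | hm
    · subst he; rw [mem_le_set π hi]
      exact ⟨by simp, by rw [← hv1]; omega⟩
    · rw [mem_le_set π h] at hm
      rw [mem_le_set π hi]
      exact ⟨by omega, by omega⟩
  calc lehmerExt π (i + 1) + 1
      = (insert (⟨i + 1, h⟩ : Fin n)
          (Finset.univ.filter (fun j : Fin n => i + 1 < (j : ℕ) ∧ (π j : ℕ) < VV π (i + 1)))).card := by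
        rw [Finset.card_insert_of_notMem hnm, le_card π h]
    _ ≤ _ := Finset.card_le_card hsub
    _ = lehmerExt π i := (le_card π hi).symm

/-- A descent with an intermediate later value makes the Lehmer code drop by at least 2. -/
lemma drop_of_witness {i w : ℕ} (h : i + 1 < n) (hw1 : i + 1 < w) (hw2 : w < n)
    (hv1 : VV π (i + 1) < VV π w) (hv2 : VV π w < VV π i) :
    lehmerExt π (i + 1) + 2 ≤ lehmerExt π i := by
  have hi : i < n := by omega
  have hvi1 : VV π (i + 1) = (π ⟨i + 1, h⟩ : ℕ) := by rw [VV, dif_pos h]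
  have hvw : VV π w = (π ⟨w, hw2⟩ : ℕ) := by rw [VV, dif_pos hw2]
  set s := Finset.univ.filter (fun j : Fin n => i + 1 < (j : ℕ) ∧ (π j : ℕ) < VV π (i + 1)) with hs
  have hnm1 : (⟨i + 1, h⟩ : Fin n) ∉ s := by rw [hs, mem_le_set π h]; simp
  have hnm2 : (⟨w, hw2⟩ : Fin n) ∉ insert (⟨i + 1, h⟩ : Fin n) s := by
    rw [Finset.mem_insert]
    rintro (he | hm)
    · have : w = i + 1 := by simpa [Fin.ext_iff] using he
      omega
    · rw [hs, mem_le_set π h] at hm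
      omega
  have hsub : insert (⟨w, hw2⟩ : Fin n) (insert (⟨i + 1, h⟩ : Fin n) s)
      ⊆ (Finset.univ.filter (fun j : Fin n => i < (j : ℕ) ∧ (π j : ℕ) < VV π i)) := by
    intro j hj
    rw [mem_le_set π hi]
    rcases Finset.mem_insert.mp hj with he | hj'
    · subst he; exact ⟨by simp; omega, by omega⟩
    rcases Finset.mem_insert.mp hj' with he | hm
    · subst he; exact ⟨by simp, by omega⟩
    · rw [hs, mem_le_set π h] at hm
      exact ⟨by omega, by omega⟩
  calc lehmerExt π (i + 1) + 2
      = (insert (⟨w, hw2⟩ : Fin n) (insert (⟨i + 1, h⟩ : Fin n) s)).card := by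
        rw [Finset.card_insert_of_notMem hnm2, Finset.card_insert_of_notMem hnm1, le_card π h]
    _ ≤ _ := Finset.card_le_card hsub
    _ = lehmerExt π i := (le_card π hi).symm

/-- Equal consecutive Lehmer entries force an ascent. -/
lemma eq_imp_asc (h132 : Avoids π p132) {i : ℕ} (h : i + 1 < n)
    (he : lehmerExt π i = lehmerExt π (i + 1)) : VV π i < VV π (i + 1) := by
  rcases Nat.lt_trichotomy (VV π i) (VV π (i + 1)) with hc | hc | hc
  · exact hc
  · exact absurd (VV_inj π (by omega) h hc) (by omega)
  · have := desc_succ π h hc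
    omega

/-- A positive Lehmer entry yields a later smaller value. -/
lemma pos_witness {i : ℕ} (h : i < n) (hp : 0 < lehmerExt π i) :
    ∃ m, i < m ∧ m < n ∧ VV π m < VV π i := by
  rw [le_card π h] at hp
  obtain ⟨j, hj⟩ := Finset.card_pos.mp hp
  rw [mem_le_set π h] at hj
  exact ⟨(j : ℕ), hj.1, j.isLt, by rw [VV_val]; exact hj.2⟩

lemma witness_pos {i m : ℕ} (h : i < n) (h1 : i < m) (h2 : m < n)
    (h3 : VV π m < VV π i) : 0 < lehmerExt π i := by
  rw [le_card π h]
  apply Finset.card_pos.mpr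
  refine ⟨⟨m, h2⟩, ?_⟩
  rw [mem_le_set π h]
  refine ⟨h1, ?_⟩
  have : VV π m = (π ⟨m, h2⟩ : ℕ) := by rw [VV, dif_pos h2]
  omega

/-- A drop of at least 2 yields an intermediate later value. -/
lemma drop_witness (h132 : Avoids π p132) {i : ℕ} (h : i + 1 < n)
    (hd : lehmerExt π (i + 1) + 2 ≤ lehmerExt π i) :
    ∃ w, i + 1 < w ∧ w < n ∧ VV π (i + 1) < VV π w ∧ VV π w < VV π i := by
  have hi : i < n := by omega
  have hdesc : VV π (i + 1) < VV π i := by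
    rcases Nat.lt_trichotomy (VV π i) (VV π (i + 1)) with hc | hc | hc
    · have := asc_eq π h132 h hc; omega
    · exact absurd (VV_inj π hi h hc) (by omega)
    · exact hc
  set s := Finset.univ.filter (fun j : Fin n => i + 1 < (j : ℕ) ∧ (π j : ℕ) < VV π (i + 1)) with hs
  have hvi1 : VV π (i + 1) = (π ⟨i + 1, h⟩ : ℕ) := by rw [VV, dif_pos h]
  have hnm1 : (⟨i + 1, h⟩ : Fin n) ∉ s := by rw [hs, mem_le_set π h]; simp
  have hcard : (insert (⟨i + 1, h⟩ : Fin n) s).card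
      < (Finset.univ.filter (fun j : Fin n => i < (j : ℕ) ∧ (π j : ℕ) < VV π i)).card := by
    rw [Finset.card_insert_of_notMem hnm1, ← le_card π h, ← le_card π hi]
    omega
  have hns : ¬ (Finset.univ.filter (fun j : Fin n => i < (j : ℕ) ∧ (π j : ℕ) < VV π i))
      ⊆ insert (⟨i + 1, h⟩ : Fin n) s := fun hsub =>
    absurd (Finset.card_le_card hsub) (by omega)
  obtain ⟨j, hjm, hjn⟩ := Finset.not_subset.mp hns
  rw [mem_le_set π hi] at hjm
  rw [Finset.mem_insert] at hjn
  push_neg at hjn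
  obtain ⟨hj1, hj2⟩ := hjn
  have hjv : (j : ℕ) ≠ i + 1 := fun he => hj1 (by simp [Fin.ext_iff, he])
  rw [hs, mem_le_set π h] at hj2
  have hj3 : i + 1 < (j : ℕ) := by omega
  have hj4 : ¬ (π j : ℕ) < VV π (i + 1) := fun hcon => hj2 ⟨hj3, hcon⟩
  have hj5 : VV π (i + 1) ≠ (π j : ℕ) := by
    have := VV_ne π h j.isLt (by omega : i + 1 ≠ (j : ℕ))
    rwa [VV_val] at this
  refine ⟨(j : ℕ), hj3, j.isLt, ?_, ?_⟩ <;> rw [VV_val] <;> omega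

/-- On an ascent-free stretch values weakly decrease. -/
lemma run_le {s t : ℕ} (ht : t < n)
    (hno : ∀ l, s ≤ l → l < t → ¬ VV π l < VV π (l + 1)) :
    ∀ u v, s ≤ u → u ≤ v → v ≤ t → VV π v ≤ VV π u := by
  have key : ∀ d u, s ≤ u → u + d ≤ t → VV π (u + d) ≤ VV π u := by
    intro d
    induction d with
    | zero => intro u _ _; simp
    | succ d ih =>
      intro u hu hle
      have h1 : VV π (u + d) ≤ VV π u := ih u hu (by omega)
      have h2 : ¬ VV π (u + d) < VV π (u + d + 1) := hno (u + d) (by omega) (by omega)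
      have : VV π (u + (d + 1)) = VV π (u + d + 1) := by ring_nf
      omega
  intro u v hu huv hv
  have := key (v - u) u hu (by omega)
  have he : u + (v - u) = v := by omega
  rwa [he] at this

/-- Crossing lemma: a walk descending past a value `v` has a step crossing it. -/
lemma cross (v : ℕ) :
    ∀ d i j, j = i + d → j < n → (∀ l, i ≤ l → l ≤ j → VV π l ≠ v) →
      VV π j < v → v < VV π i →
      ∃ l, i ≤ l ∧ l < j ∧ v < VV π l ∧ VV π (l + 1) < v := by
  intro d
  induction d with
  | zero =>
    intro i j he _ _ h1 h2
    subst he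
    omega
  | succ d ih =>
    intro i j he hj hne h1 h2
    rcases Nat.lt_or_ge (VV π (i + 1)) v with hlt | hge
    · exact ⟨i, le_refl i, by omega, h2, hlt⟩
    · have hne1 : VV π (i + 1) ≠ v := hne (i + 1) (by omega) (by omega)
      obtain ⟨l, hl1, hl2, hl3, hl4⟩ := ih (i + 1) j (by omega) hj
        (fun l a b => hne l (by omega) b) h1 (by omega)
      exact ⟨l, by omega, hl2, hl3, hl4⟩

/-- An occurrence of 2341 with third position `k`, in value form. -/
def OCCp {n : ℕ} (π : Equiv.Perm (Fin n)) (k : ℕ) : Prop :=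
  ∃ i j l, i < j ∧ j < k ∧ k < l ∧ l < n ∧
    VV π l < VV π i ∧ VV π i < VV π j ∧ VV π j < VV π k

/-- A normalized occurrence with second ascent at `c`. -/
def NQp {n : ℕ} (π : Equiv.Perm (Fin n)) (c : ℕ) : Prop :=
  c + 1 < n ∧ VV π c < VV π (c + 1) ∧
    ∃ a, a < c ∧ VV π a < VV π (a + 1) ∧ VV π (a + 1) < VV π (c + 1) ∧
      ∃ m, c + 1 < m ∧ m < n ∧ VV π m < VV π a

lemma occ_of_contains (hC : Contains π p2341) : ∃ k, OCCp π k := by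
  obtain ⟨f, hf, hiff⟩ := hC
  refine ⟨(f 2 : ℕ), (f 0 : ℕ), (f 1 : ℕ), (f 3 : ℕ),
    hf (by decide : (0 : Fin 4) < 1), hf (by decide : (1 : Fin 4) < 2),
    hf (by decide : (2 : Fin 4) < 3), (f 3).isLt, ?_, ?_, ?_⟩ <;>
    rw [VV_val, VV_val]
  · exact (hiff 3 0).mpr (by decide)
  · exact (hiff 0 1).mpr (by decide)
  · exact (hiff 1 2).mpr (by decide)

lemma occ_big (h132 : Avoids π p132) {i j l : ℕ} (hij : i < j) (hjl : j < l) (hl : l < n)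
    (hv1 : VV π l < VV π i) (hv2 : VV π i < VV π j) :
    ∀ x, i < x → x < j → VV π l < VV π x := by
  intro x h1 h2
  by_contra hcon
  have hxn : x < n := by omega
  have hne : VV π x ≠ VV π l := VV_ne π hxn hl (by omega)
  have hlt : VV π x < VV π l := by omega
  exact h132V π h132 x j l h2 hjl hl (by omega) (hv1.trans hv2)

/-- Normalization: any 2341-occurrence yields a normalized one. -/
lemma norm (h132 : Avoids π p132) (hC : Contains π p2341) : ∃ c, NQp π c := by
  classical
  have hOF : ∃ k, OCCp π k := occ_of_contains π hC
  set k0 := Nat.find hOF with hk0def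
  have hspec : OCCp π k0 := Nat.find_spec hOF
  have hminK : ∀ k', k' < k0 → ¬ OCCp π k' := fun k' h => Nat.find_min hOF h
  have hPex : ∃ i, i < k0 ∧ (∃ j l, i < j ∧ j < k0 ∧ k0 < l ∧ l < n ∧
      VV π l < VV π i ∧ VV π i < VV π j ∧ VV π j < VV π k0) := by
    obtain ⟨i, j, l, h1, h2, h3, h4, h5, h6, h7⟩ := hspec
    exact ⟨i, by omega, j, l, h1, h2, h3, h4, h5, h6, h7⟩
  obtain ⟨i0, hi0k, ⟨j, l, hij, hjk, hkl, hln, hv1, hv2, hv3⟩, hmaxI⟩ :=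
    exists_greatest _ hPex
  have hkn : k0 < n := by omega
  have hji : j = i0 + 1 := by
    by_contra hnej
    have hx : i0 + 1 < j := by omega
    have hxn : i0 + 1 < n := by omega
    rcases Nat.lt_trichotomy (VV π (i0 + 1)) (VV π j) with hc | hc | hc
    · exact hmaxI (i0 + 1) (by omega) (by omega)
        ⟨j, l, hx, hjk, hkl, hln,
          occ_big π h132 hij (by omega) hln hv1 hv2 (i0 + 1) (by omega) hx, hc, hv3⟩
    · exact absurd (VV_inj π hxn (by omega) hc) (by omega)
    · exact h132V π h132 i0 (i0 + 1) j (by omega) hx (by omega) hv2 hc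
  subst hji
  have hk1n : k0 - 1 < n := by omega
  have hasc : VV π (k0 - 1) < VV π k0 := by
    rcases Nat.lt_trichotomy (VV π (k0 - 1)) (VV π k0) with hc | hc | hc
    · exact hc
    · exact absurd (VV_inj π hk1n hkn hc) (by omega)
    · have hne : i0 + 1 ≠ k0 - 1 := by
        intro he
        rw [he] at hv3
        omega
      have hlt2 : i0 + 1 < k0 - 1 := by omega
      exact absurd (show OCCp π (k0 - 1) from
        ⟨i0, i0 + 1, l, hij, hlt2, by omega, hln, hv1, hv2, hv3.trans hc⟩)
        (hminK _ (by omega))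
  have hk0e : k0 - 1 + 1 = k0 := by omega
  refine ⟨k0 - 1, by omega, by rw [hk0e]; exact hasc, i0, by omega, hv2,
    by rw [hk0e]; exact hv3, l, by rw [hk0e]; exact hkl, hln, hv1⟩

lemma rhs_avoids (h132 : Avoids π p132)
    (hA : ¬ ∃ i : ℕ, lehmerExt π i = lehmerExt π (i + 1) ∧
        lehmerExt π (i + 1) = lehmerExt π (i + 2) ∧ 0 < lehmerExt π i)
    (hB : ∀ i j : ℕ, i < j →
        lehmerExt π i = lehmerExt π (i + 1) → 0 < lehmerExt π i →
        lehmerExt π j = lehmerExt π (j + 1) → 0 < lehmerExt π j →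
        ∃ l : ℕ, i < l ∧ l < j ∧ lehmerExt π (l + 1) + 2 ≤ lehmerExt π l) :
    Avoids π p2341 := by
  intro hC
  classical
  have hNE : ∃ c, NQp π c := norm π h132 hC
  obtain ⟨c0, hspec, hminC⟩ : ∃ c0, NQp π c0 ∧ ∀ c', c' < c0 → ¬ NQp π c' :=
    ⟨Nat.find hNE, Nat.find_spec hNE, fun c' h => Nat.find_min hNE h⟩
  obtain ⟨hc1, hascC, a, hac, hascA, hv, m, hcm, hmn, hvm⟩ := hspec
  -- everything on [a, c0+1] is above VV π m
  have hmc1 : VV π m < VV π (c0 + 1) := by omega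
  have hbig : ∀ x, a ≤ x → x ≤ c0 + 1 → VV π m < VV π x := by
    intro x h1 h2
    rcases Nat.eq_or_lt_of_le h1 with he | hgt
    · rw [← he]; exact hvm
    rcases Nat.eq_or_lt_of_le h2 with he | hlt
    · rw [he]; exact hmc1
    by_contra hcon
    have hxn : x < n := by omega
    have hne : VV π x ≠ VV π m := VV_ne π hxn hmn (by omega)
    exact h132V π h132 x (c0 + 1) m hlt hcm hmn (by omega) hmc1
  -- last ascent a1 in [a, c0)
  obtain ⟨a1, ha1c, ⟨ha1a, hascA1⟩, hmaxA⟩ :=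
    exists_greatest (P := fun l => a ≤ l ∧ VV π l < VV π (l + 1)) c0
      ⟨a, hac, le_refl a, hascA⟩
  have hrun : ∀ u v, a1 + 1 ≤ u → u ≤ v → v ≤ c0 → VV π v ≤ VV π u := by
    apply run_le π (by omega : c0 < n)
    intro l hl1 hl2 hcon
    exact hmaxA l (by omega) hl2 ⟨by omega, hcon⟩
  have hpos1 : 0 < lehmerExt π a1 :=
    witness_pos π (by omega) (by omega : a1 < m) hmn (hbig a1 ha1a (by omega))
  have p1 : lehmerExt π a1 = lehmerExt π (a1 + 1) := asc_eq π h132 (by omega) hascA1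
  by_cases hce : c0 = a1 + 1
  · subst hce
    exact hA ⟨a1, p1, asc_eq π h132 (by omega : a1 + 1 + 1 < n) hascC, hpos1⟩
  · have hlt : a1 + 1 < c0 := by omega
    have p2 : lehmerExt π c0 = lehmerExt π (c0 + 1) := asc_eq π h132 hc1 hascC
    have hpos2 : 0 < lehmerExt π c0 :=
      witness_pos π (by omega) (by omega : c0 < m) hmn (hbig c0 (by omega) (by omega))
    obtain ⟨l', hl1, hl2, hdrop⟩ := hB a1 c0 (by omega) p1 hpos1 p2 hpos2
    obtain ⟨w, hw1, hw2, hw3, hw4⟩ := drop_witness π h132 (by omega : l' + 1 < n) hdrop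
    have hwc : c0 < w := by
      by_contra hle
      have := hrun (l' + 1) w (by omega) (by omega) (by omega)
      omega
    have hkey : VV π (c0 + 1) < VV π l' := by
      rcases Nat.lt_or_ge (c0 + 1) w with hgt | hle2
      · have h5 : VV π c0 ≤ VV π (l' + 1) := hrun (l' + 1) c0 (by omega) (by omega) (by omega)
        have h7 : ¬ VV π w < VV π (c0 + 1) := fun hcon =>
          h132V π h132 c0 (c0 + 1) w (by omega) hgt hw2 (by omega) hcon
        have h8 : VV π w ≠ VV π (c0 + 1) := VV_ne π hw2 hc1 (by omega)
        omega
      · have : w = c0 + 1 := by omega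
        rw [← this]
        exact hw4
    have hl'a : VV π l' ≤ VV π (a1 + 1) := hrun (a1 + 1) l' (le_refl _) (by omega) (by omega)
    by_cases haa : a1 = a
    · rw [haa] at hl'a
      omega
    · have haa1 : a < a1 := by omega
      rcases Nat.lt_or_ge (VV π (a + 1)) (VV π (a1 + 1)) with hx | hx
      · exact hminC a1 (by omega)
          ⟨by omega, hascA1, a, haa1, hascA, hx, m, by omega, hmn, hvm⟩
      · have hne2 : VV π (a1 + 1) ≠ VV π (a + 1) := VV_ne π (by omega) (by omega) (by omega)
        omega

lemma notA_contains (h132 : Avoids π p132) {i : ℕ}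
    (e1 : lehmerExt π i = lehmerExt π (i + 1)) (e2 : lehmerExt π (i + 1) = lehmerExt π (i + 2))
    (hp : 0 < lehmerExt π i) : Contains π p2341 := by
  have h2n : i + 2 < n := pos_lt π (by omega : 0 < lehmerExt π (i + 2))
  have asc1 : VV π i < VV π (i + 1) := eq_imp_asc π h132 (by omega) e1
  have asc2 : VV π (i + 1) < VV π (i + 2) := by
    have := eq_imp_asc π h132 (by omega : i + 1 + 1 < n) (by
      simpa [show i + 1 + 1 = i + 2 by omega] using e2)
    simpa [show i + 1 + 1 = i + 2 by omega] using this
  obtain ⟨m, hm1, hm2, hm3⟩ := pos_witness π h2n (by omega : 0 < lehmerExt π (i + 2))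
  have hx1 : VV π m < VV π (i + 1) := by
    have h7 : ¬ VV π (i + 1) < VV π m := fun hcon =>
      h132V π h132 (i + 1) (i + 2) m (by omega) hm1 hm2 hcon hm3
    have h8 : VV π m ≠ VV π (i + 1) := VV_ne π hm2 (by omega) (by omega)
    omega
  have hx2 : VV π m < VV π i := by
    have h7 : ¬ VV π i < VV π m := fun hcon =>
      h132V π h132 i (i + 1) m (by omega) (by omega) hm2 hcon hx1
    have h8 : VV π m ≠ VV π i := VV_ne π hm2 (by omega) (by omega)
    omega
  exact contains2341 π (by omega : i < i + 1) (by omega : i + 1 < i + 2) hm1 hm2 hx2 asc1 asc2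

lemma notB_contains (h132 : Avoids π p132) {i j : ℕ} (hij : i < j)
    (e1 : lehmerExt π i = lehmerExt π (i + 1)) (hpi : 0 < lehmerExt π i)
    (e2 : lehmerExt π j = lehmerExt π (j + 1)) (hpj : 0 < lehmerExt π j)
    (hnd : ∀ l, i < l → l < j → ¬ lehmerExt π (l + 1) + 2 ≤ lehmerExt π l) :
    Contains π p2341 := by
  have hj1n : j + 1 < n := pos_lt π (e2 ▸ hpj)
  have hi1n : i + 1 < n := pos_lt π (e1 ▸ hpi)
  have asc1 : VV π i < VV π (i + 1) := eq_imp_asc π h132 hi1n e1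
  have asc2 : VV π j < VV π (j + 1) := eq_imp_asc π h132 hj1n e2
  obtain ⟨m, hm1, hm2, hm3⟩ := pos_witness π hj1n (e2 ▸ hpj)
  have hmj : VV π m < VV π j := by
    have h7 : ¬ VV π j < VV π m := fun hcon =>
      h132V π h132 j (j + 1) m (by omega) hm1 hm2 hcon hm3
    have h8 : VV π m ≠ VV π j := VV_ne π hm2 (by omega) (by omega)
    omega
  have hmi : VV π m < VV π i := by
    rcases Nat.lt_trichotomy (VV π i) (VV π j) with hc | hc | hc
    · have h7 : ¬ VV π i < VV π m := fun hcon =>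
        h132V π h132 i j m hij (by omega) hm2 hcon hmj
      have h8 : VV π m ≠ VV π i := VV_ne π hm2 (by omega) (by omega)
      omega
    · exact absurd (VV_inj π (by omega) (by omega) hc) (by omega)
    · omega
  have hij1 : VV π i < VV π (j + 1) := by
    by_contra hcon
    have h8 : VV π (j + 1) ≠ VV π i := VV_ne π hj1n (by omega) (by omega)
    have hlt : VV π (j + 1) < VV π i := by omega
    obtain ⟨l0, hl1, hl2, hl3, hl4⟩ := cross π (VV π (j + 1)) (j - i) i j (by omega) (by omega)
      (fun l ha hb => VV_ne π (by omega) hj1n (by omega)) asc2 hlt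
    rcases Nat.eq_or_lt_of_le hl1 with he | hgt
    · rw [← he] at hl3 hl4
      omega
    · exact hnd l0 hgt hl2
        (drop_of_witness π (by omega) (by omega : l0 + 1 < j + 1) hj1n hl4 hl3)
  have hi1j1 : VV π (i + 1) < VV π (j + 1) := by
    have h7 : ¬ VV π (j + 1) < VV π (i + 1) := fun hcon =>
      h132V π h132 i (i + 1) (j + 1) (by omega) (by omega) hj1n hij1 hcon
    have h8 : VV π (i + 1) ≠ VV π (j + 1) := VV_ne π (by omega) hj1n (by omega)
    omega
  exact contains2341 π (by omega : i < i + 1) (by omega : i + 1 < j + 1) hm1 hm2 hmi asc1 hi1j1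

end SPMaux



/-- Let `π` be an indecomposable 132-avoiding permutation with `inv(π) = k` and let
`λ = Λ(π)` be the partition of `k` given by its Lehmer code (here `lehmerExt π`, with
`λ_i = 0` beyond the parts).  Then `π` avoids 2341 if and only if:
(a) there is no index `i` with `λ_i = λ_{i+1} = λ_{i+2} > 0`, and
(b) whenever `i < j` with `λ_i = λ_{i+1} > 0` and `λ_j = λ_{j+1} > 0`, there is an index
`l` with `i < l < j` and `λ_l − λ_{l+1} ≥ 2`.  (Equivalently, `λ ∈ SPM(k)`.) -/
theorem avoids_2341_iff_spm (n k : ℕ) (π : Equiv.Perm (Fin n))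
    (hind : Indecomposable π) (h132 : Avoids π p132) (hk : invCount π = k) :
    Avoids π p2341 ↔
      ((¬ ∃ i : ℕ, lehmerExt π i = lehmerExt π (i + 1) ∧
          lehmerExt π (i + 1) = lehmerExt π (i + 2) ∧ 0 < lehmerExt π i) ∧
       (∀ i j : ℕ, i < j →
          lehmerExt π i = lehmerExt π (i + 1) → 0 < lehmerExt π i →
          lehmerExt π j = lehmerExt π (j + 1) → 0 < lehmerExt π j →
          ∃ l : ℕ, i < l ∧ l < j ∧ lehmerExt π (l + 1) + 2 ≤ lehmerExt π l)) := by
  constructor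
  · intro hAv
    constructor
    · rintro ⟨i, e1, e2, hp⟩
      exact hAv (SPMaux.notA_contains π h132 e1 e2 hp)
    · intro i j hij e1 hpi e2 hpj
      by_contra hnd
      push_neg at hnd
      refine hAv (SPMaux.notB_contains π h132 hij e1 hpi e2 hpj (fun l h1 h2 => ?_))
      have := hnd l h1 h2
      omega
  · rintro ⟨hA, hB⟩
    exact SPMaux.rhs_avoids π h132 hA hB
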